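/- Let A₁,…,A_k be invertible matrices with ‖A_i‖ < 1 (operator norm), k ≥ 2. The topological pressure P(s) = lim_n (1/n) log ∑_{|𝚒|=n} φ^s(A_𝚒) is strictly decreasing and continuous in s on [0, d), with P(0) = log k > 0, and hence has at most one zero on [0,d); if P(s) < 0 for some s < d, the zero exists and is unique. -/

import Mathlib

theorem Matrix.isHermitian_transpose_mul_self {m n α : Type*} [Fintype m] [CommRing α]
    [StarRing α] [TrivialStar α] (A : Matrix m n α) : (Matrix.transpose A * A).IsHermitian := by
  simpa [Matrix.conjTranspose_eq_transpose_of_trivial] using Matrix.isHermitian_conjTranspose_mul_self A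

/-- Singular values of `A` in decreasing order: square roots of the eigenvalues of `AᵀA`. -/
noncomputable def singVals {d : ℕ} (A : Matrix (Fin d) (Fin d) ℝ) : Fin d → ℝ :=
  fun j => Real.sqrt ((Matrix.isHermitian_transpose_mul_self A).eigenvalues
    (Tuple.sort (Matrix.isHermitian_transpose_mul_self A).eigenvalues j.rev))

/-- The singular value function `φ^s(A) = α₁(A)⋯α_l(A)·α_{l+1}(A)^{s-l}`, `l = ⌊s⌋`. -/
noncomputable def svf {d : ℕ} (s : ℝ) (A : Matrix (Fin d) (Fin d) ℝ) : ℝ :=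
  if h : ⌊s⌋₊ < d then
    (∏ j : Fin d, if (j : ℕ) < ⌊s⌋₊ then singVals A j else 1) *
      singVals A ⟨⌊s⌋₊, h⟩ ^ (s - (⌊s⌋₊ : ℝ))
  else 0

open Matrix in
theorem singVals_eq_norm {d : ℕ} (B : Matrix (Fin d) (Fin d) ℝ) (j : Fin d) :
    ∃ v : EuclideanSpace ℝ (Fin d), ‖v‖ = 1 ∧
      singVals B j = ‖Matrix.toEuclideanCLM (𝕜 := ℝ) B v‖ := by
  set hH := Matrix.isHermitian_transpose_mul_self B with hHdef
  set i := Tuple.sort hH.eigenvalues j.rev with hidef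
  set v : EuclideanSpace ℝ (Fin d) := hH.eigenvectorBasis i with hvdef
  have hv1 : ‖v‖ = 1 := hH.eigenvectorBasis.orthonormal.1 i
  set T := Matrix.toEuclideanCLM (𝕜 := ℝ) B with hTdef
  refine ⟨v, hv1, ?_⟩
  have hev : Matrix.toEuclideanCLM (𝕜 := ℝ) (Bᴴ * B) v = hH.eigenvalues i • v := by
    ext x
    exact congrFun (hH.mulVec_eigenvectorBasis i) x
  have key : hH.eigenvalues i = ‖T v‖ ^ 2 := by
    have h1 : (‖T v‖ : ℝ) ^ 2 = inner ℝ (T v) (T v) := (real_inner_self_eq_norm_sq _).symm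
    have h2 : (inner ℝ (T v) (T v) : ℝ) = inner ℝ ((star T) (T v)) v := by
      rw [ContinuousLinearMap.star_eq_adjoint, ContinuousLinearMap.adjoint_inner_left]
    have h3 : (star T) (T v) = hH.eigenvalues i • v := by
      rw [hTdef, ← map_star, ← ContinuousLinearMap.mul_apply, ← _root_.map_mul]
      simpa [Matrix.star_eq_conjTranspose] using hev
    rw [h1, h2, h3, real_inner_smul_left, real_inner_self_eq_norm_sq, hv1]
    ring
  show Real.sqrt (hH.eigenvalues i) = _
  rw [key, Real.sqrt_sq (norm_nonneg _)]

lemma euclidean_nontrivial {d : ℕ} (hd : 0 < d) : Nontrivial (EuclideanSpace ℝ (Fin d)) := by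
  refine ⟨⟨EuclideanSpace.single ⟨0, hd⟩ (1:ℝ), 0, ?_⟩⟩
  intro h
  have h2 : (EuclideanSpace.single (⟨0, hd⟩ : Fin d) (1:ℝ)) ⟨0, hd⟩ = 0 := by rw [h]; rfl
  rw [EuclideanSpace.single_apply] at h2
  simp at h2

lemma singVals_le_norm {d : ℕ} (B : Matrix (Fin d) (Fin d) ℝ) (j : Fin d) :
    singVals B j ≤ ‖Matrix.toEuclideanCLM (𝕜 := ℝ) B‖ := by
  obtain ⟨v, hv, he⟩ := singVals_eq_norm B j
  rw [he]
  calc ‖Matrix.toEuclideanCLM (𝕜 := ℝ) B v‖ ≤ ‖Matrix.toEuclideanCLM (𝕜 := ℝ) B‖ * ‖v‖ :=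
        ContinuousLinearMap.le_opNorm _ _
    _ = _ := by rw [hv, mul_one]

lemma inv_norm_le_singVals {d : ℕ} (hd : 0 < d) {B C : Matrix (Fin d) (Fin d) ℝ}
    (h : C * B = 1) (j : Fin d) :
    0 < ‖Matrix.toEuclideanCLM (𝕜 := ℝ) C‖ ∧
    ‖Matrix.toEuclideanCLM (𝕜 := ℝ) C‖⁻¹ ≤ singVals B j := by
  haveI := euclidean_nontrivial hd
  obtain ⟨v, hv, he⟩ := singVals_eq_norm B j
  have hCB : (Matrix.toEuclideanCLM (𝕜 := ℝ) C) ((Matrix.toEuclideanCLM (𝕜 := ℝ) B) v) = v := by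
    rw [← ContinuousLinearMap.mul_apply, ← _root_.map_mul, h, _root_.map_one,
      ContinuousLinearMap.one_apply]
  have h1 : 1 ≤ ‖Matrix.toEuclideanCLM (𝕜 := ℝ) C‖ * ‖Matrix.toEuclideanCLM (𝕜 := ℝ) B v‖ := by
    calc (1:ℝ) = ‖v‖ := hv.symm
      _ = ‖(Matrix.toEuclideanCLM (𝕜 := ℝ) C) ((Matrix.toEuclideanCLM (𝕜 := ℝ) B) v)‖ := by
          rw [hCB]
      _ ≤ _ := ContinuousLinearMap.le_opNorm _ _
  have hC0 : 0 < ‖Matrix.toEuclideanCLM (𝕜 := ℝ) C‖ := by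
    by_contra hc
    push_neg at hc
    nlinarith [norm_nonneg (Matrix.toEuclideanCLM (𝕜 := ℝ) B v)]
  refine ⟨hC0, ?_⟩
  rw [he, inv_eq_one_div, div_le_iff₀ hC0]
  nlinarith

lemma list_prod_bounds {d : ℕ} (hd : 0 < d) (σ ρ : ℝ) (hσ : 0 ≤ σ) (hρ : 0 ≤ ρ) :
    ∀ l : List (Matrix (Fin d) (Fin d) ℝ),
    (∀ M ∈ l, ‖Matrix.toEuclideanCLM (𝕜 := ℝ) M‖ ≤ ρ ∧
      ∃ N : Matrix (Fin d) (Fin d) ℝ, N * M = 1 ∧ ‖Matrix.toEuclideanCLM (𝕜 := ℝ) N‖ ≤ σ) →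
    ‖Matrix.toEuclideanCLM (𝕜 := ℝ) l.prod‖ ≤ ρ ^ l.length ∧
      ∃ C : Matrix (Fin d) (Fin d) ℝ, C * l.prod = 1 ∧
        ‖Matrix.toEuclideanCLM (𝕜 := ℝ) C‖ ≤ σ ^ l.length := by
  haveI := euclidean_nontrivial hd
  intro l
  induction l with
  | nil =>
    intro _
    refine ⟨by simp [_root_.map_one], 1, by simp, by simp [_root_.map_one]⟩
  | cons M rest ih =>
    intro hmem
    obtain ⟨hMρ, N, hNM, hNσ⟩ := hmem M List.mem_cons_self
    obtain ⟨hr, C, hC1, hCσ⟩ := ih fun M' hM' => hmem M' (List.mem_cons_of_mem _ hM')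
    constructor
    · rw [List.prod_cons, _root_.map_mul]
      calc ‖Matrix.toEuclideanCLM (𝕜 := ℝ) M * Matrix.toEuclideanCLM (𝕜 := ℝ) rest.prod‖
          ≤ ‖Matrix.toEuclideanCLM (𝕜 := ℝ) M‖ * ‖Matrix.toEuclideanCLM (𝕜 := ℝ) rest.prod‖ :=
            norm_mul_le _ _
        _ ≤ ρ * ρ ^ rest.length := mul_le_mul hMρ hr (norm_nonneg _) hρ
        _ = ρ ^ (M :: rest).length := by rw [List.length_cons]; ring
    · refine ⟨C * N, ?_, ?_⟩
      · rw [List.prod_cons, ← mul_assoc, mul_assoc C N M, hNM, mul_one, hC1]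
      · rw [_root_.map_mul]
        calc ‖Matrix.toEuclideanCLM (𝕜 := ℝ) C * Matrix.toEuclideanCLM (𝕜 := ℝ) N‖
            ≤ ‖Matrix.toEuclideanCLM (𝕜 := ℝ) C‖ * ‖Matrix.toEuclideanCLM (𝕜 := ℝ) N‖ :=
              norm_mul_le _ _
          _ ≤ σ ^ rest.length * σ := mul_le_mul hCσ hNσ (norm_nonneg _) (pow_nonneg hσ _)
          _ = σ ^ (M :: rest).length := by rw [List.length_cons]; ring

noncomputable def expE (s : ℝ) (j : ℕ) : ℝ := min 1 (max 0 (s - j))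

lemma expE_mono {s t : ℝ} (h : s ≤ t) (j : ℕ) : expE s j ≤ expE t j :=
  min_le_min le_rfl (max_le_max le_rfl (by linarith))

lemma sum_expE : ∀ (n : ℕ) {x : ℝ}, 0 ≤ x → x ≤ n →
    ∑ j ∈ Finset.range n, expE x j = x := by
  intro n
  induction n with
  | zero => intro x h0 h1; simp at h1 ⊢; linarith
  | succ m ih =>
    intro x h0 h1
    rw [Finset.sum_range_succ]
    rcases le_or_gt x m with hc | hc
    · rw [ih h0 hc]
      have : expE x m = 0 := by
        simp only [expE]
        rw [max_eq_left (by linarith), min_eq_right (by norm_num)]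
      rw [this, add_zero]
    · have h2 : ∀ j ∈ Finset.range m, expE x j = 1 := by
        intro j hj
        simp only [Finset.mem_range] at hj
        have : (1:ℝ) ≤ x - j := by
          have : (j:ℝ) + 1 ≤ (m:ℝ) := by exact_mod_cast hj
          linarith
        simp only [expE]
        rw [max_eq_right (by linarith), min_eq_left this]
      rw [Finset.sum_congr rfl h2]
      have : expE x m = x - m := by
        simp only [expE]
        push_cast at h1
        rw [max_eq_right (by linarith), min_eq_right (by linarith)]
      rw [this, Finset.sum_const, Finset.card_range, nsmul_eq_mul, mul_one]
      ring

lemma svf_eq_prod {d : ℕ} (B : Matrix (Fin d) (Fin d) ℝ) {s : ℝ} (hs : 0 ≤ s) (h : ⌊s⌋₊ < d) :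
    svf s B = ∏ j : Fin d, singVals B j ^ (expE s (j : ℕ)) := by
  rw [svf, dif_pos h]
  have hfl : (⟨⌊s⌋₊, h⟩ : Fin d) ∈ Finset.univ := Finset.mem_univ _
  have hsingle : singVals B ⟨⌊s⌋₊, h⟩ ^ (s - (⌊s⌋₊ : ℝ)) =
      ∏ j : Fin d, (if j = ⟨⌊s⌋₊, h⟩ then singVals B j ^ (s - (⌊s⌋₊ : ℝ)) else 1) := by
    rw [Finset.prod_ite_eq' Finset.univ (⟨⌊s⌋₊, h⟩ : Fin d)
      (fun j => singVals B j ^ (s - (⌊s⌋₊ : ℝ))), if_pos hfl]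
  rw [hsingle, ← Finset.prod_mul_distrib]
  refine Finset.prod_congr rfl fun j _ => ?_
  have hfloor_le : (⌊s⌋₊ : ℝ) ≤ s := Nat.floor_le hs
  have hlt_floor : s < (⌊s⌋₊ : ℝ) + 1 := Nat.lt_floor_add_one s
  rcases lt_trichotomy (j : ℕ) ⌊s⌋₊ with hj | hj | hj
  · rw [if_pos hj, if_neg (by intro hE; rw [hE] at hj; simp at hj)]
    have : expE s (j:ℕ) = 1 := by
      simp only [expE]
      have : (1:ℝ) ≤ s - j := by
        have : ((j:ℕ):ℝ) + 1 ≤ (⌊s⌋₊ : ℝ) := by exact_mod_cast hj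
        linarith
      rw [max_eq_right (by linarith), min_eq_left this]
    rw [this, mul_one, Real.rpow_one]
  · rw [if_neg (by omega), if_pos (by exact Fin.ext hj)]
    have : expE s (j:ℕ) = s - (⌊s⌋₊:ℝ) := by
      simp only [expE, hj]
      rw [max_eq_right (by linarith), min_eq_right (by linarith)]
    rw [this, one_mul]
  · rw [if_neg (by omega), if_neg (by intro hE; rw [hE] at hj; simp at hj)]
    have : expE s (j:ℕ) = 0 := by
      simp only [expE]
      have : s - j ≤ 0 := by
        have : (⌊s⌋₊ : ℝ) + 1 ≤ (j:ℕ) := by exact_mod_cast hj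
        linarith
      rw [max_eq_left this, min_eq_right (by norm_num)]
    rw [this, mul_one, Real.rpow_zero]

lemma svf_pos {d : ℕ} {B : Matrix (Fin d) (Fin d) ℝ} {a s : ℝ} (ha : 0 < a)
    (hal : ∀ j, a ≤ singVals B j) (hs : 0 ≤ s) (h : ⌊s⌋₊ < d) : 0 < svf s B := by
  rw [svf_eq_prod B hs h]
  exact Finset.prod_pos fun j _ => Real.rpow_pos_of_pos (lt_of_lt_of_le ha (hal j)) _

lemma svf_ratio {d : ℕ} {B : Matrix (Fin d) (Fin d) ℝ} {a b s t : ℝ} (ha : 0 < a) (hb : 0 < b)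
    (hal : ∀ j, a ≤ singVals B j) (hbu : ∀ j, singVals B j ≤ b)
    (hs : 0 ≤ s) (hst : s ≤ t) (ht : t < (d : ℝ)) :
    svf s B * a ^ (t - s) ≤ svf t B ∧ svf t B ≤ svf s B * b ^ (t - s) := by
  have ht0 : 0 ≤ t := le_trans hs hst
  have hfs : ⌊s⌋₊ < d := by
    have := (Nat.floor_lt hs).2 (lt_of_le_of_lt hst ht); exact_mod_cast this
  have hft : ⌊t⌋₊ < d := by
    have := (Nat.floor_lt ht0).2 ht; exact_mod_cast this
  have hpos : ∀ j : Fin d, 0 < singVals B j := fun j => lt_of_lt_of_le ha (hal j)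
  have hsum : ∑ j : Fin d, (expE t (j:ℕ) - expE s (j:ℕ)) = t - s := by
    rw [Finset.sum_sub_distrib]
    rw [Fin.sum_univ_eq_sum_range (fun j => expE t j) d,
        Fin.sum_univ_eq_sum_range (fun j => expE s j) d,
        sum_expE d ht0 (le_of_lt ht), sum_expE d hs (le_of_lt (lt_of_le_of_lt hst ht))]
  have hsplit : svf t B = svf s B * ∏ j : Fin d, singVals B j ^ (expE t (j:ℕ) - expE s (j:ℕ)) := by
    rw [svf_eq_prod B hs hfs, svf_eq_prod B ht0 hft, ← Finset.prod_mul_distrib]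
    refine Finset.prod_congr rfl fun j _ => ?_
    rw [← Real.rpow_add (hpos j)]
    ring_nf
  constructor
  · rw [hsplit]
    refine mul_le_mul_of_nonneg_left ?_ (le_of_lt (by
      rw [svf_eq_prod B hs hfs]
      exact Finset.prod_pos fun j _ => Real.rpow_pos_of_pos (hpos j) _))
    calc a ^ (t - s) = ∏ j : Fin d, a ^ (expE t (j:ℕ) - expE s (j:ℕ)) := by
          rw [← Real.rpow_sum_of_pos ha, hsum]
      _ ≤ ∏ j : Fin d, singVals B j ^ (expE t (j:ℕ) - expE s (j:ℕ)) := by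
          refine Finset.prod_le_prod (fun j _ => le_of_lt (Real.rpow_pos_of_pos ha _))
            (fun j _ => Real.rpow_le_rpow (le_of_lt ha) (hal j)
              (by linarith [expE_mono hst (j:ℕ)]))
  · rw [hsplit]
    refine mul_le_mul_of_nonneg_left ?_ (le_of_lt (by
      rw [svf_eq_prod B hs hfs]
      exact Finset.prod_pos fun j _ => Real.rpow_pos_of_pos (hpos j) _))
    calc (∏ j : Fin d, singVals B j ^ (expE t (j:ℕ) - expE s (j:ℕ)))
        ≤ ∏ j : Fin d, b ^ (expE t (j:ℕ) - expE s (j:ℕ)) := by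
          refine Finset.prod_le_prod (fun j _ => le_of_lt (Real.rpow_pos_of_pos (hpos j) _))
            (fun j _ => Real.rpow_le_rpow (le_of_lt (hpos j)) (hbu j)
              (by linarith [expE_mono hst (j:ℕ)]))
      _ = b ^ (t - s) := by rw [← Real.rpow_sum_of_pos hb, hsum]

lemma svf_zero {d : ℕ} (hd : 0 < d) (B : Matrix (Fin d) (Fin d) ℝ) : svf 0 B = 1 := by
  rw [svf, dif_pos (by simpa using hd)]
  simp

/-- Basic properties of the topological pressure `P`: strictly decreasing and
continuous on `[0, d)`, `P 0 = log k > 0`, at most one zero, and a unique zero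
if `P` is negative somewhere on `[0, d)`. -/
theorem stmt15 {d k : ℕ} (hd : 0 < d) (hk : 2 ≤ k)
    (A : Fin k → Matrix (Fin d) (Fin d) ℝ) (hA : ∀ i, IsUnit (A i))
    (hnorm : ∀ i, ‖Matrix.toEuclideanCLM (𝕜 := ℝ) (A i)‖ < 1)
    (P : ℝ → ℝ)
    (hP : ∀ s ∈ Set.Ico (0 : ℝ) (d : ℝ), Filter.Tendsto
      (fun n : ℕ => (1 / (n : ℝ)) *
        Real.log (∑ w : Fin n → Fin k, svf s ((List.ofFn fun j => A (w j)).prod)))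
      Filter.atTop (nhds (P s))) :
    StrictAntiOn P (Set.Ico (0 : ℝ) (d : ℝ)) ∧
    ContinuousOn P (Set.Ico (0 : ℝ) (d : ℝ)) ∧
    P 0 = Real.log k ∧ 0 < P 0 ∧
    (∀ s₁ ∈ Set.Ico (0 : ℝ) (d : ℝ), ∀ s₂ ∈ Set.Ico (0 : ℝ) (d : ℝ),
      P s₁ = 0 → P s₂ = 0 → s₁ = s₂) ∧
    ((∃ s ∈ Set.Ico (0 : ℝ) (d : ℝ), P s < 0) →
      ∃! s, s ∈ Set.Ico (0 : ℝ) (d : ℝ) ∧ P s = 0) := by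
  classical
  haveI := euclidean_nontrivial hd
  have hk0 : 0 < k := by omega
  set i₀ : Fin k := ⟨0, hk0⟩ with hi₀
  have hne : (Finset.univ : Finset (Fin k)).Nonempty := ⟨i₀, Finset.mem_univ _⟩
  set ρ : ℝ := Finset.univ.sup' hne (fun i => ‖Matrix.toEuclideanCLM (𝕜 := ℝ) (A i)‖) with hρdef
  set Ninv : Fin k → Matrix (Fin d) (Fin d) ℝ := fun i => ↑((hA i).unit)⁻¹ with hNdef
  have hNA : ∀ i, Ninv i * A i = 1 := by
    intro i
    rw [hNdef]
    exact (hA i).val_inv_mul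
  have hAN : ∀ i, A i * Ninv i = 1 := by
    intro i
    rw [hNdef]
    exact (hA i).mul_val_inv
  set σ' : ℝ := Finset.univ.sup' hne
    (fun i => ‖Matrix.toEuclideanCLM (𝕜 := ℝ) (Ninv i)‖) with hσ'def
  have hρ_lt : ρ < 1 := by
    rw [hρdef]
    exact (Finset.sup'_lt_iff hne).2 fun i _ => hnorm i
  have hρ_le : ∀ i, ‖Matrix.toEuclideanCLM (𝕜 := ℝ) (A i)‖ ≤ ρ := by
    intro i
    rw [hρdef]
    exact Finset.le_sup' (fun i => ‖Matrix.toEuclideanCLM (𝕜 := ℝ) (A i)‖) (Finset.mem_univ i)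
  have hσ'_le : ∀ i, ‖Matrix.toEuclideanCLM (𝕜 := ℝ) (Ninv i)‖ ≤ σ' := by
    intro i
    rw [hσ'def]
    exact Finset.le_sup' (fun i => ‖Matrix.toEuclideanCLM (𝕜 := ℝ) (Ninv i)‖) (Finset.mem_univ i)
  have hσ'_pos : 0 < σ' :=
    lt_of_lt_of_le (inv_norm_le_singVals hd (hNA i₀) ⟨0, hd⟩).1 (hσ'_le i₀)
  have hρ_pos : 0 < ρ :=
    lt_of_lt_of_le (inv_norm_le_singVals hd (hAN i₀) ⟨0, hd⟩).1 (hρ_le i₀)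
  set σ : ℝ := σ'⁻¹ with hσdef
  have hσ_pos : 0 < σ := inv_pos.2 hσ'_pos
  have hσ_le_ρ : σ ≤ ρ := by
    have h1 := (inv_norm_le_singVals hd (hNA i₀) ⟨0, hd⟩).2
    have h2 := singVals_le_norm (A i₀) ⟨0, hd⟩
    have h3 : σ ≤ ‖Matrix.toEuclideanCLM (𝕜 := ℝ) (Ninv i₀)‖⁻¹ := by
      rw [hσdef]
      exact inv_anti₀ (inv_norm_le_singVals hd (hNA i₀) ⟨0, hd⟩).1 (hσ'_le i₀)
    exact le_trans h3 (le_trans h1 (le_trans h2 (hρ_le i₀)))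
  have hσ_lt1 : σ < 1 := lt_of_le_of_lt hσ_le_ρ hρ_lt
  have hlogρ : Real.log ρ < 0 := Real.log_neg hρ_pos hρ_lt
  have hlogσ : Real.log σ < 0 := Real.log_neg hσ_pos hσ_lt1
  have hlogσρ : Real.log σ ≤ Real.log ρ := Real.log_le_log hσ_pos hσ_le_ρ
  -- per-word singular value bounds
  have word : ∀ (n : ℕ) (w : Fin n → Fin k) (j : Fin d),
      σ ^ n ≤ singVals ((List.ofFn fun j => A (w j)).prod) j ∧
      singVals ((List.ofFn fun j => A (w j)).prod) j ≤ ρ ^ n := by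
    intro n w j
    have hmem : ∀ M ∈ (List.ofFn fun j => A (w j)),
        ‖Matrix.toEuclideanCLM (𝕜 := ℝ) M‖ ≤ ρ ∧
        ∃ N : Matrix (Fin d) (Fin d) ℝ, N * M = 1 ∧
          ‖Matrix.toEuclideanCLM (𝕜 := ℝ) N‖ ≤ σ' := by
      intro M hM
      rw [List.mem_ofFn] at hM
      obtain ⟨j', rfl⟩ := hM
      exact ⟨hρ_le _, Ninv (w j'), hNA _, hσ'_le _⟩
    obtain ⟨hub, C, hC1, hCσ⟩ := list_prod_bounds hd σ' ρ hσ'_pos.le hρ_pos.le _ hmem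
    rw [List.length_ofFn] at hub hCσ
    obtain ⟨hC0, hinv⟩ := inv_norm_le_singVals hd hC1 j
    refine ⟨?_, (singVals_le_norm _ j).trans hub⟩
    calc σ ^ n = (σ' ^ n)⁻¹ := by rw [hσdef, inv_pow]
      _ ≤ ‖Matrix.toEuclideanCLM (𝕜 := ℝ) C‖⁻¹ := inv_anti₀ hC0 hCσ
      _ ≤ _ := hinv
  -- positivity of partition sums
  have hSpos : ∀ (u : ℝ), 0 ≤ u → u < (d:ℝ) → ∀ n : ℕ,
      0 < ∑ w : Fin n → Fin k, svf u ((List.ofFn fun j => A (w j)).prod) := by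
    intro u hu hud n
    have hfu : ⌊u⌋₊ < d := by exact_mod_cast (Nat.floor_lt hu).2 hud
    refine Finset.sum_pos (fun w _ => ?_) ⟨fun _ => i₀, Finset.mem_univ _⟩
    exact svf_pos (pow_pos hσ_pos n) (fun j => (word n w j).1) hu hfu
  -- main pressure estimate
  have main : ∀ s ∈ Set.Ico (0:ℝ) (d:ℝ), ∀ t ∈ Set.Ico (0:ℝ) (d:ℝ), s ≤ t →
      P t ≤ P s + (t - s) * Real.log ρ ∧ P s + (t - s) * Real.log σ ≤ P t := by
    intro s hs t ht hst
    have hev : ∀ᶠ n : ℕ in Filter.atTop,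
        ((1 / (n:ℝ)) * Real.log (∑ w : Fin n → Fin k,
            svf t ((List.ofFn fun j => A (w j)).prod))
          ≤ (1 / (n:ℝ)) * Real.log (∑ w : Fin n → Fin k,
            svf s ((List.ofFn fun j => A (w j)).prod)) + (t - s) * Real.log ρ)
        ∧ ((1 / (n:ℝ)) * Real.log (∑ w : Fin n → Fin k,
            svf s ((List.ofFn fun j => A (w j)).prod)) + (t - s) * Real.log σ
          ≤ (1 / (n:ℝ)) * Real.log (∑ w : Fin n → Fin k,
            svf t ((List.ofFn fun j => A (w j)).prod))) := by
      filter_upwards [Filter.eventually_ge_atTop 1] with n hn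
      have hn0 : (0:ℝ) < n := by exact_mod_cast hn
      have hSs0 := hSpos s hs.1 hs.2 n
      have hSt0 := hSpos t (hs.1.trans hst) ht.2 n
      have hup : (∑ w : Fin n → Fin k, svf t ((List.ofFn fun j => A (w j)).prod))
          ≤ (∑ w : Fin n → Fin k, svf s ((List.ofFn fun j => A (w j)).prod))
            * (ρ ^ n) ^ (t - s) := by
        rw [Finset.sum_mul]
        exact Finset.sum_le_sum fun w _ =>
          (svf_ratio (pow_pos hσ_pos n) (pow_pos hρ_pos n) (fun j => (word n w j).1)
            (fun j => (word n w j).2) hs.1 hst ht.2).2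
      have hlo : (∑ w : Fin n → Fin k, svf s ((List.ofFn fun j => A (w j)).prod))
            * (σ ^ n) ^ (t - s)
          ≤ (∑ w : Fin n → Fin k, svf t ((List.ofFn fun j => A (w j)).prod)) := by
        rw [Finset.sum_mul]
        exact Finset.sum_le_sum fun w _ =>
          (svf_ratio (pow_pos hσ_pos n) (pow_pos hρ_pos n) (fun j => (word n w j).1)
            (fun j => (word n w j).2) hs.1 hst ht.2).1
      constructor
      · have l1 : Real.log (∑ w : Fin n → Fin k, svf t ((List.ofFn fun j => A (w j)).prod))
            ≤ Real.log (∑ w : Fin n → Fin k, svf s ((List.ofFn fun j => A (w j)).prod))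
              + (t - s) * ((n:ℝ) * Real.log ρ) := by
          calc Real.log (∑ w : Fin n → Fin k, svf t ((List.ofFn fun j => A (w j)).prod))
              ≤ Real.log ((∑ w : Fin n → Fin k, svf s ((List.ofFn fun j => A (w j)).prod))
                  * (ρ ^ n) ^ (t - s)) := Real.log_le_log hSt0 hup
            _ = Real.log (∑ w : Fin n → Fin k, svf s ((List.ofFn fun j => A (w j)).prod))
                  + Real.log ((ρ ^ n) ^ (t - s)) :=
                Real.log_mul (ne_of_gt hSs0)
                  (ne_of_gt (Real.rpow_pos_of_pos (pow_pos hρ_pos n) _))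
            _ = _ := by
                rw [Real.log_rpow (pow_pos hρ_pos n), Real.log_pow]
                try push_cast
                try ring
        have l2 := mul_le_mul_of_nonneg_left l1 (le_of_lt (one_div_pos.2 hn0))
        calc (1 / (n:ℝ)) * Real.log (∑ w : Fin n → Fin k,
              svf t ((List.ofFn fun j => A (w j)).prod)) ≤ _ := l2
          _ = (1 / (n:ℝ)) * Real.log (∑ w : Fin n → Fin k,
                svf s ((List.ofFn fun j => A (w j)).prod)) + (t - s) * Real.log ρ := by
              field_simp
      · have l1 : Real.log (∑ w : Fin n → Fin k, svf s ((List.ofFn fun j => A (w j)).prod))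
              + (t - s) * ((n:ℝ) * Real.log σ)
            ≤ Real.log (∑ w : Fin n → Fin k, svf t ((List.ofFn fun j => A (w j)).prod)) := by
          calc Real.log (∑ w : Fin n → Fin k, svf s ((List.ofFn fun j => A (w j)).prod))
                  + (t - s) * ((n:ℝ) * Real.log σ)
              = Real.log ((∑ w : Fin n → Fin k, svf s ((List.ofFn fun j => A (w j)).prod))
                  * (σ ^ n) ^ (t - s)) := by
                rw [Real.log_mul (ne_of_gt hSs0)
                  (ne_of_gt (Real.rpow_pos_of_pos (pow_pos hσ_pos n) _)),
                  Real.log_rpow (pow_pos hσ_pos n), Real.log_pow]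
                try push_cast
                try ring
            _ ≤ _ := Real.log_le_log (mul_pos hSs0 (Real.rpow_pos_of_pos (pow_pos hσ_pos n) _)) hlo
        have l2 := mul_le_mul_of_nonneg_left l1 (le_of_lt (one_div_pos.2 hn0))
        calc (1 / (n:ℝ)) * Real.log (∑ w : Fin n → Fin k,
                svf s ((List.ofFn fun j => A (w j)).prod)) + (t - s) * Real.log σ
            = (1 / (n:ℝ)) * (Real.log (∑ w : Fin n → Fin k,
                svf s ((List.ofFn fun j => A (w j)).prod))
                + (t - s) * ((n:ℝ) * Real.log σ)) := by
              field_simp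
          _ ≤ _ := l2
    have ht1 := hP t ht
    have hs1 := hP s hs
    constructor
    · exact le_of_tendsto_of_tendsto ht1 (hs1.add_const ((t - s) * Real.log ρ))
        (hev.mono fun n h => h.1)
    · exact le_of_tendsto_of_tendsto (hs1.add_const ((t - s) * Real.log σ)) ht1
        (hev.mono fun n h => h.2)
  -- P 0 = log k
  have h0mem : (0:ℝ) ∈ Set.Ico (0:ℝ) (d:ℝ) := ⟨le_refl _, by exact_mod_cast hd⟩
  have hP0 : P 0 = Real.log k := by
    have h1 := hP 0 h0mem
    have h2 : Filter.Tendsto (fun n : ℕ => (1 / (n:ℝ)) *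
        Real.log (∑ w : Fin n → Fin k, svf (0:ℝ) ((List.ofFn fun j => A (w j)).prod)))
        Filter.atTop (nhds (Real.log k)) := by
      have heq : ∀ᶠ n : ℕ in Filter.atTop, (Real.log (k:ℝ) : ℝ) = (1 / (n:ℝ)) *
          Real.log (∑ w : Fin n → Fin k, svf (0:ℝ) ((List.ofFn fun j => A (w j)).prod)) := by
        filter_upwards [Filter.eventually_ge_atTop 1] with n hn
        have hn0 : (n:ℝ) ≠ 0 := by
          have : (0:ℝ) < n := by exact_mod_cast hn
          linarith
        have hsum : (∑ w : Fin n → Fin k, svf (0:ℝ) ((List.ofFn fun j => A (w j)).prod))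
            = (k:ℝ) ^ n := by
          rw [Finset.sum_congr rfl fun w _ => svf_zero hd _, Finset.sum_const,
            Finset.card_univ, Fintype.card_fun, Fintype.card_fin, Fintype.card_fin,
            nsmul_eq_mul, mul_one]
          push_cast
          ring
        rw [hsum, Real.log_pow]
        field_simp
      exact Filter.Tendsto.congr' heq tendsto_const_nhds
    exact tendsto_nhds_unique h1 h2
  have hP0pos : 0 < P 0 := by
    rw [hP0]
    exact Real.log_pos (by exact_mod_cast (by omega : 1 < k))
  -- strict antitonicity
  have hanti : StrictAntiOn P (Set.Ico (0:ℝ) (d:ℝ)) := by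
    intro s hs t ht hst
    have h1 := (main s hs t ht hst.le).1
    have h2 : (t - s) * Real.log ρ < 0 := mul_neg_of_pos_of_neg (by linarith) hlogρ
    linarith
  -- continuity
  have hcont : ContinuousOn P (Set.Ico (0:ℝ) (d:ℝ)) := by
    have hL : 0 < -Real.log σ := by linarith
    refine (LipschitzOnWith.of_dist_le_mul (K := Real.toNNReal (-Real.log σ)) ?_).continuousOn
    intro x hx y hy
    rw [Real.coe_toNNReal _ hL.le, Real.dist_eq, Real.dist_eq]
    rcases le_total x y with h | h
    · obtain ⟨h1, h2⟩ := main x hx y hy h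
      have hxy : |x - y| = y - x := by
        rw [abs_sub_comm]
        exact abs_of_nonneg (by linarith)
      rw [hxy]
      have e1 : P y - P x ≤ (y - x) * (-Real.log σ) := by
        have e0 : (y - x) * Real.log ρ ≤ (y - x) * (-Real.log σ) :=
          mul_le_mul_of_nonneg_left (by linarith) (by linarith)
        linarith
      have e2 : P x - P y ≤ (y - x) * (-Real.log σ) := by linarith
      rw [abs_le]
      constructor <;> [linarith; linarith]
    · obtain ⟨h1, h2⟩ := main y hy x hx h
      have hxy : |x - y| = x - y := abs_of_nonneg (by linarith)
      rw [hxy]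
      have e1 : P x - P y ≤ (x - y) * (-Real.log σ) := by
        have e0 : (x - y) * Real.log ρ ≤ (x - y) * (-Real.log σ) :=
          mul_le_mul_of_nonneg_left (by linarith) (by linarith)
        linarith
      have e2 : P y - P x ≤ (x - y) * (-Real.log σ) := by linarith
      rw [abs_le]
      constructor <;> [linarith; linarith]
  -- uniqueness of zeros
  have huniq : ∀ s₁ ∈ Set.Ico (0:ℝ) (d:ℝ), ∀ s₂ ∈ Set.Ico (0:ℝ) (d:ℝ),
      P s₁ = 0 → P s₂ = 0 → s₁ = s₂ := by
    intro s₁ h₁ s₂ h₂ hz₁ hz₂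
    exact hanti.injOn h₁ h₂ (by rw [hz₁, hz₂])
  refine ⟨hanti, hcont, hP0, hP0pos, huniq, ?_⟩
  rintro ⟨s₀, hs₀, hneg⟩
  have hs₀pos : 0 < s₀ := by
    rcases lt_or_eq_of_le hs₀.1 with h | h
    · exact h
    · exfalso
      rw [← h] at hneg
      linarith
  have hsub : Set.Icc (0:ℝ) s₀ ⊆ Set.Ico (0:ℝ) (d:ℝ) := fun x hx =>
    ⟨hx.1, lt_of_le_of_lt hx.2 hs₀.2⟩
  have hcont' : ContinuousOn P (Set.Icc (0:ℝ) s₀) := hcont.mono hsub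
  have hmem : (0:ℝ) ∈ Set.Icc (P s₀) (P 0) := ⟨le_of_lt hneg, le_of_lt hP0pos⟩
  obtain ⟨c, hcIcc, hPc⟩ := intermediate_value_Icc' (le_of_lt hs₀pos) hcont' hmem
  have hcmem : c ∈ Set.Ico (0:ℝ) (d:ℝ) := hsub hcIcc
  exact ⟨c, ⟨hcmem, hPc⟩, fun y hy => huniq y hy.1 c hcmem hy.2 hPc⟩
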